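/- arXiv:2001.06971 — 7 statements merged into one kernel-verified Lean document; each statement's English description precedes it below -/
import Mathlib

section
/- Let R be an integral domain, M a free R-module, and U a subset of the group Rˣ of units of R. Then the map S : (M × U) × (M × U) → (M × U) × (M × U) defined by S((a,x),(b,y)) = (((1−y)·a + x·b, y), (a, x)), where units act on M by scalar multiplication, is a switch: it is bijective and satisfies the set-theoretic Yang–Baxter equation. -/
namespace Paper

/-- `F × id` on `X × X × X`. -/
def mulId {X : Type*} (F : X × X → X × X) : X × X × X → X × X × X :=
  fun p => ((F (p.1, p.2.1)).1, (F (p.1, p.2.1)).2, p.2.2)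

/-- `id × G` on `X × X × X`. -/
def idMul {X : Type*} (G : X × X → X × X) : X × X × X → X × X × X :=
  fun p => (p.1, G p.2)

/-- The set-theoretic Yang–Baxter equation. -/
def YB {X : Type*} (S : X × X → X × X) : Prop :=
  (mulId S) ∘ (idMul S) ∘ (mulId S) = (idMul S) ∘ (mulId S) ∘ (idMul S)

/-- Non-degeneracy: `x ↦ Sˡ(a,x)` and `x ↦ Sʳ(x,b)` are bijections. -/
def NonDeg {X : Type*} (S : X × X → X × X) : Prop :=
  (∀ a : X, Function.Bijective fun x => (S (a, x)).1) ∧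
  (∀ b : X, Function.Bijective fun x => (S (x, b)).2)

/-- The biquandle condition for a non-degenerate switch. -/
def BiqCond {X : Type*} (S : X × X → X × X) : Prop :=
  ∀ a : X, (∃ u, (S (u, a)).2 = a ∧ (S (u, a)).1 = u) ∧
           (∃ d, (S (a, d)).1 = a ∧ (S (a, d)).2 = d)

section ModuleTwoSwitch

variable (R : Type*) [CommRing R] (M : Type*) [AddCommGroup M] [Module R M] (U : Set Rˣ)

/-- Since `x` is a unit, `b` is recovered from `c = (1 - y) a + x b` as `x⁻¹ (c - (1 - y) a)`. -/
def moduleTwoSwitch : (M × U) × (M × U) ≃ (M × U) × (M × U) where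
  toFun p := (((1 - ((p.2.2 : Rˣ) : R)) • p.1.1 + ((p.1.2 : Rˣ) : R) • p.2.1, p.2.2), p.1)
  invFun p := (p.2, ((p.2.2 : Rˣ)⁻¹ • (p.1.1 - (1 - ((p.1.2 : Rˣ) : R)) • p.2.1), p.1.2))
  left_inv := by
    rintro ⟨⟨a, x⟩, ⟨b, y⟩⟩
    ext <;> simp [Units.smul_def, smul_smul]
  right_inv := by
    rintro ⟨⟨c, y⟩, ⟨a, x⟩⟩
    ext <;> simp [Units.smul_def, smul_smul]

theorem moduleTwoSwitch_apply (a b : M) (x y : U) :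
    moduleTwoSwitch R M U ((a, x), (b, y)) =
      (((1 - ((y : Rˣ) : R)) • a + ((x : Rˣ) : R) • b, y), (a, x)) :=
  rfl

theorem yB_moduleTwoSwitch : YB (moduleTwoSwitch R M U) := by
  funext ⟨⟨a, x⟩, ⟨b, y⟩, ⟨c, z⟩⟩
  simp only [Function.comp_apply, mulId, idMul, moduleTwoSwitch_apply]
  -- all coordinates but the first `M`-entry agree definitionally
  refine Prod.ext (Prod.ext ?_ rfl) rfl
  module

end ModuleTwoSwitch

theorem module_two_switch_is_switch_general (R : Type*) [CommRing R]
    (M : Type*) [AddCommGroup M] [Module R M]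
    (U : Set Rˣ)
    (S : (M × U) × (M × U) → (M × U) × (M × U))
    (hS : ∀ (a b : M) (x y : U),
      S ((a, x), (b, y)) =
        ((((1 : R) - ((y : Rˣ) : R)) • a + ((x : Rˣ) : R) • b, y), (a, x))) :
    Function.Bijective S ∧ YB S := by
  obtain rfl : S = moduleTwoSwitch R M U := funext fun ⟨⟨a, x⟩, ⟨b, y⟩⟩ => hS a b x y
  exact ⟨(moduleTwoSwitch R M U).bijective, yB_moduleTwoSwitch R M U⟩

/-- The module 2-switch $S(a,b;x,y) = ((1-y)a + xb, a; y, x)$ is a switch on `M × U`. -/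
theorem module_two_switch_is_switch (R : Type*) [CommRing R] [IsDomain R]
    (M : Type*) [AddCommGroup M] [Module R M] [Module.Free R M]
    (U : Set Rˣ)
    (S : (M × U) × (M × U) → (M × U) × (M × U))
    (hS : ∀ (a b : M) (x y : U),
      S ((a, x), (b, y)) =
        ((((1 : R) - ((y : Rˣ) : R)) • a + ((x : Rˣ) : R) • b, y), (a, x))) :
    Function.Bijective S ∧ YB S :=
  module_two_switch_is_switch_general R M U S hS

end Paper
end

section
/- Let R be a commutative ring, s, t ∈ Rˣ units of R, and M an R-module. Then the Alexander switch S : M × M → M × M defined by S(x,y) = (s·y, t·x + (1 − st)·y) is a non-degenerate biquandle switch: S is bijective, satisfies the set-theoretic Yang–Baxter equation, is non-degenerate, and satisfies the biquandle condition. -/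
namespace Paper

section

variable {R M : Type*} [CommRing R] [AddCommGroup M] [Module R M]

def alexanderSwitch (s t : R) (p : M × M) : M × M :=
  (s • p.2, t • p.1 + (1 - s * t) • p.2)

theorem yb_alexanderSwitch (s t : R) : YB (alexanderSwitch (M := M) s t) := by
  funext ⟨a, b, c⟩
  simp only [Function.comp_apply, mulId, idMul, alexanderSwitch, Prod.mk.injEq]
  exact ⟨trivial, by module, by module⟩

theorem alexanderSwitch_smul_self (s t : R) (a : M) :
    alexanderSwitch s t (s • a, a) = (s • a, a) := by
  simp only [alexanderSwitch, Prod.mk.injEq]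
  exact ⟨trivial, by module⟩

theorem alexanderSwitch_self_inv_smul (s : Rˣ) (t : R) (a : M) :
    alexanderSwitch (s : R) t (a, ((s⁻¹ : Rˣ) : R) • a) = (a, ((s⁻¹ : Rˣ) : R) • a) := by
  have hs : (s : R) • ((s⁻¹ : Rˣ) : R) • a = a := by simp [← Units.smul_def]
  simp only [alexanderSwitch, Prod.mk.injEq, sub_smul, one_smul, mul_comm (s : R), mul_smul, hs,
    true_and]
  abel

/-- The inverse solves `s • y = p.1` for `y`, then `t • x + (1 - s t) • y = p.2` for `x`. -/
def alexanderSwitchInv (s t : Rˣ) (p : M × M) : M × M :=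
  (t⁻¹ • (p.2 - (1 - (s : R) * t) • s⁻¹ • p.1), s⁻¹ • p.1)

theorem bijective_alexanderSwitch (s t : Rˣ) :
    Function.Bijective (alexanderSwitch (M := M) (s : R) t) := by
  refine Function.bijective_iff_has_inverse.2 ⟨alexanderSwitchInv s t, ?_, ?_⟩ <;>
    rintro ⟨x, y⟩ <;> simp [alexanderSwitch, alexanderSwitchInv, ← Units.smul_def]

theorem nonDeg_alexanderSwitch (s t : Rˣ) : NonDeg (alexanderSwitch (M := M) (s : R) t) :=
  ⟨fun _ => MulAction.bijective s,
    fun b => (Equiv.addRight ((1 - (s : R) * t) • b)).bijective.comp (MulAction.bijective t)⟩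

theorem biqCond_alexanderSwitch (s : Rˣ) (t : R) : BiqCond (alexanderSwitch (M := M) (s : R) t) :=
  fun a => ⟨⟨(s : R) • a, by rw [alexanderSwitch_smul_self]; exact ⟨rfl, rfl⟩⟩,
    ⟨((s⁻¹ : Rˣ) : R) • a, by rw [alexanderSwitch_self_inv_smul]; exact ⟨rfl, rfl⟩⟩⟩

end

/-- The Alexander switch $S(x,y) = (sy, tx + (1-st)y)$ is a non-degenerate
biquandle switch on an `R`-module `M`. -/
theorem alexander_is_biquandle_switch (R : Type*) [CommRing R] (s t : Rˣ)
    (M : Type*) [AddCommGroup M] [Module R M]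
    (S : M × M → M × M)
    (hS : ∀ x y : M,
      S (x, y) = ((s : R) • y, (t : R) • x + ((1 : R) - (s : R) * (t : R)) • y)) :
    Function.Bijective S ∧ YB S ∧ NonDeg S ∧ BiqCond S := by
  obtain rfl : S = alexanderSwitch (s : R) t := funext fun p => hS p.1 p.2
  exact ⟨bijective_alexanderSwitch s t, yb_alexanderSwitch _ _, nonDeg_alexanderSwitch s t,
    biqCond_alexanderSwitch s _⟩
end Paper
end

section
/- Let X be a quandle and X₁ ⊆ X a trivial subquandle. Then the map S : (X × X₁) × (X × X₁) → (X × X₁) × (X × X₁) defined by S((a,x),(b,y)) = ((b, y), (a*b, x)) is a switch on X × X₁: it is bijective and satisfies the set-theoretic Yang–Baxter equation. -/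
namespace Paper

/-!
In its first coordinates `S` is the rack switch `(a, b) ↦ (b, b ◃ a)`, whose Yang–Baxter
equation is exactly self-distributivity and whose inverse comes from the rack inverse `◃⁻¹`;
in its second coordinates it is the flip `(x, y) ↦ (y, x)`. Both bijectivity and the
Yang–Baxter equation pass to such coordinatewise products of maps.
-/

section Switches

variable {A B : Type*}

theorem yb_swap : YB (Prod.swap : A × A → A × A) := rfl

open Quandles in
def Shelf.switch (A : Type*) [Shelf A] (p : A × A) : A × A := (p.2, p.2 ◃ p.1)

theorem yb_shelf_switch [Shelf A] : YB (Shelf.switch A) := by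
  funext ⟨a, b, c⟩
  simp only [mulId, idMul, Shelf.switch, Function.comp_apply, Prod.mk.injEq, true_and]
  exact Shelf.self_distrib

open Quandles in
def Rack.switchEquiv (A : Type*) [Rack A] : A × A ≃ A × A where
  toFun := Shelf.switch A
  invFun p := (p.1 ◃⁻¹ p.2, p.1)
  left_inv p := by simp [Shelf.switch]
  right_inv p := by simp [Shelf.switch]

/-- `prodSwitch S₁ S₂ ((a, x), (b, y))` is
`(((S₁ (a, b)).1, (S₂ (x, y)).1), ((S₁ (a, b)).2, (S₂ (x, y)).2))`. -/
def prodSwitch (S₁ : A × A → A × A) (S₂ : B × B → B × B) :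
    (A × B) × (A × B) → (A × B) × (A × B) :=
  Equiv.prodProdProdComm A A B B ∘ Prod.map S₁ S₂ ∘ Equiv.prodProdProdComm A B A B

theorem bijective_prodSwitch {S₁ : A × A → A × A} {S₂ : B × B → B × B}
    (h₁ : S₁.Bijective) (h₂ : S₂.Bijective) : (prodSwitch S₁ S₂).Bijective :=
  (Equiv.bijective _).comp ((h₁.prodMap h₂).comp (Equiv.bijective _))

theorem yb_prodSwitch {S₁ : A × A → A × A} {S₂ : B × B → B × B}
    (h₁ : YB S₁) (h₂ : YB S₂) : YB (prodSwitch S₁ S₂) := by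
  funext ⟨⟨a, x⟩, ⟨b, y⟩, ⟨c, z⟩⟩
  have e₁ := congrFun h₁ (a, b, c)
  have e₂ := congrFun h₂ (x, y, z)
  simp only [mulId, idMul, Function.comp_apply, Prod.ext_iff] at e₁ e₂
  simp only [mulId, idMul, prodSwitch, Function.comp_apply, Prod.map,
    Equiv.prodProdProdComm_apply, Prod.ext_iff]
  exact ⟨⟨e₁.1, e₂.1⟩, ⟨e₁.2.1, e₂.2.1⟩, ⟨e₁.2.2, e₂.2.2⟩⟩

end Switches

open Quandles in
/-- The paper's `a*b` is `b ◃ a`. -/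
theorem quandle_S_is_switch_general (X : Type*) [Quandle X] (X₁ : Set X)
    (S : (X × X₁) × (X × X₁) → (X × X₁) × (X × X₁))
    (hS : ∀ (a b : X) (x y : X₁),
      S ((a, x), (b, y)) = ((b, y), (b ◃ a, x))) :
    Function.Bijective S ∧ YB S := by
  obtain rfl : S = prodSwitch (Shelf.switch X) Prod.swap := by
    funext ⟨⟨a, x⟩, ⟨b, y⟩⟩
    exact hS a b x y
  exact ⟨bijective_prodSwitch (Rack.switchEquiv X).bijective Prod.swap_bijective,
    yb_prodSwitch yb_shelf_switch yb_swap⟩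

open Quandles in
/-- The map $S(a,x;b,y) = (b,y; a*b, x)$ is a switch on `X × X₁`, where `X₁`
is a trivial subquandle of the quandle `X` (here `a*b = b ◃ a`). -/
theorem quandle_S_is_switch (X : Type*) [Quandle X] (X₁ : Set X)
    (htriv : ∀ x ∈ X₁, ∀ y ∈ X₁, y ◃ x = x)
    (S : (X × X₁) × (X × X₁) → (X × X₁) × (X × X₁))
    (hS : ∀ (a b : X) (x y : X₁),
      S ((a, x), (b, y)) = ((b, y), (b ◃ a, x))) :
    Function.Bijective S ∧ YB S :=
  quandle_S_is_switch_general X X₁ S hS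

end Paper
end

section
/- Let X be a quandle and X₁ ⊆ X a trivial subquandle. Then the map V : (X × X₁) × (X × X₁) → (X × X₁) × (X × X₁) defined by V((a,x),(b,y)) = ((b*⁻¹x, y), (a*y, x)) is an involutive switch on X × X₁: it is bijective, V ∘ V = id, and V satisfies the set-theoretic Yang–Baxter equation. -/
namespace Rack

open Quandles

variable {R : Type*} [Rack R] {x y : R}

theorem commute_act'_of_act_eq (h : x ◃ y = y) : Commute (act' x) (act' y) := by
  have hconj := ad_conj x y
  rw [h] at hconj
  exact (eq_mul_inv_iff_mul_eq.mp hconj).symm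

theorem act_act_comm_of_act_eq (h : x ◃ y = y) (c : R) : x ◃ y ◃ c = y ◃ x ◃ c :=
  DFunLike.congr_fun (commute_act'_of_act_eq h) c

theorem act_invAct_comm_of_act_eq (h : x ◃ y = y) (c : R) : y ◃ x ◃⁻¹ c = x ◃⁻¹ y ◃ c :=
  DFunLike.congr_fun (commute_act'_of_act_eq h).inv_left.symm c

theorem invAct_invAct_comm_of_act_eq (h : x ◃ y = y) (c : R) :
    y ◃⁻¹ x ◃⁻¹ c = x ◃⁻¹ y ◃⁻¹ c :=
  DFunLike.congr_fun (commute_act'_of_act_eq h).inv_inv.symm c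

end Rack

namespace Paper

open Quandles in
/-- In Mathlib's convention, the paper's `a*b` is `b ◃ a` and `a*⁻¹b` is `b ◃⁻¹ a`. -/
theorem quandle_V_is_involutive_switch (X : Type*) [Quandle X] (X₁ : Set X)
    (htriv : ∀ x ∈ X₁, ∀ y ∈ X₁, y ◃ x = x)
    (V : (X × X₁) × (X × X₁) → (X × X₁) × (X × X₁))
    (hV : ∀ (a b : X) (x y : X₁),
      V ((a, x), (b, y)) = (((x : X) ◃⁻¹ b, y), ((y : X) ◃ a, x))) :
    Function.Bijective V ∧ V ∘ V = id ∧ YB V := by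
  have hinv : Function.Involutive V := by
    rintro ⟨⟨a, x⟩, ⟨b, y⟩⟩
    simp [hV]
  refine ⟨hinv.bijective, hinv.comp_self, ?_⟩
  funext p
  obtain ⟨⟨a, x⟩, ⟨b, y⟩, ⟨c, z⟩⟩ := p
  simp only [Function.comp_apply, mulId, idMul, hV, Prod.mk.injEq, and_true]
  exact ⟨Rack.invAct_invAct_comm_of_act_eq (htriv y y.2 x x.2) c,
    Rack.act_invAct_comm_of_act_eq (htriv z z.2 x x.2) b,
    (Rack.act_act_comm_of_act_eq (htriv z z.2 y y.2) a).symm⟩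

end Paper
end

section
/- Let X be a quandle and X₁ ⊆ X a trivial subquandle, and let S : (X × X₁) × (X × X₁) → (X × X₁) × (X × X₁) be defined by S((a,x),(b,y)) = ((b, y), (a*b, x)). Then S is a biquandle switch on Y := X × X₁: for all A, B ∈ Y the maps B ↦ S^l(A,B) and A ↦ S^r(A,B) (with the other argument fixed) are bijections of Y, and for every A ∈ Y there exists U ∈ Y with S^r(U,A) = A and S^l(U,A) = U, and there exists D ∈ Y with S^l(A,D) = A and S^r(A,D) = D. -/
namespace Paper

section Switch

variable {Y : Type*} (S : Y × Y → Y × Y)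

theorem nonDeg_of_fst_eq_right (hl : ∀ A B, (S (A, B)).1 = B)
    (hr : ∀ B, Function.Bijective fun A => (S (A, B)).2) : NonDeg S :=
  ⟨fun A => (funext (hl A) : (fun B => (S (A, B)).1) = id) ▸ Function.bijective_id, hr⟩

theorem biqCond_of_map_diag (h : ∀ A, S (A, A) = (A, A)) : BiqCond S :=
  fun A => ⟨⟨A, by simp [h]⟩, ⟨A, by simp [h]⟩⟩

end Switch

open Quandles in
theorem bijective_act_fst {X T : Type*} [Rack X] (b : X) :
    Function.Bijective fun p : X × T => (b ◃ p.1, p.2) :=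
  ((Rack.act' b).prodCongr (Equiv.refl T)).bijective

open Quandles in
theorem quandle_S_is_biquandle_switch_general (X : Type*) [Quandle X] (X₁ : Set X)
    (S : (X × X₁) × (X × X₁) → (X × X₁) × (X × X₁))
    (hS : ∀ (a b : X) (x y : X₁),
      S ((a, x), (b, y)) = ((b, y), (b ◃ a, x))) :
    NonDeg S ∧ BiqCond S := by
  have hS' : ∀ A B, S (A, B) = (B, (B.1 ◃ A.1, A.2)) := fun A B => hS A.1 B.1 A.2 B.2
  refine ⟨nonDeg_of_fst_eq_right S (fun A B => by rw [hS']) fun B => ?_,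
    biqCond_of_map_diag S fun A => by rw [hS', Quandle.fix]⟩
  simpa only [hS'] using bijective_act_fst (T := X₁) B.1

open Quandles in
/-- The map $S(a,x;b,y) = (b,y; a*b, x)$ is a biquandle switch on `X × X₁`:
it is non-degenerate and satisfies the biquandle condition. -/
theorem quandle_S_is_biquandle_switch (X : Type*) [Quandle X] (X₁ : Set X)
    (htriv : ∀ x ∈ X₁, ∀ y ∈ X₁, y ◃ x = x)
    (S : (X × X₁) × (X × X₁) → (X × X₁) × (X × X₁))
    (hS : ∀ (a b : X) (x y : X₁),
      S ((a, x), (b, y)) = ((b, y), (b ◃ a, x))) :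
    NonDeg S ∧ BiqCond S :=
  quandle_S_is_biquandle_switch_general X X₁ S hS
end Paper
end

section
/- Let X be a quandle and X₁ ⊆ X a trivial subquandle, and let V : (X × X₁) × (X × X₁) → (X × X₁) × (X × X₁) be defined by V((a,x),(b,y)) = ((b*⁻¹x, y), (a*y, x)). Then V is a biquandle switch on Y := X × X₁: for all A, B ∈ Y the maps B ↦ V^l(A,B) and A ↦ V^r(A,B) (with the other argument fixed) are bijections of Y, and for every A ∈ Y there exists U ∈ Y with V^r(U,A) = A and V^l(U,A) = U, and there exists D ∈ Y with V^l(A,D) = A and V^r(A,D) = D. -/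
namespace Paper

open Quandles

section
variable {X : Type*} [Rack X] (X₁ : Set X)

def rackSwitch (p : (X × X₁) × (X × X₁)) : (X × X₁) × (X × X₁) :=
  (((p.1.2 : X) ◃⁻¹ p.2.1, p.2.2), ((p.2.2 : X) ◃ p.1.1, p.1.2))

theorem nonDeg_rackSwitch : NonDeg (rackSwitch X₁) :=
  ⟨fun A => (Rack.act' (A.2 : X)).symm.bijective.prodMap Function.bijective_id,
    fun B => (Rack.act' (B.2 : X)).bijective.prodMap Function.bijective_id⟩

theorem biqCond_rackSwitch : BiqCond (rackSwitch X₁) := fun ⟨a, x⟩ =>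
  ⟨⟨((x : X) ◃⁻¹ a, x), by simp [rackSwitch, Rack.act_invAct_eq]⟩,
    ⟨((x : X) ◃ a, x), by simp [rackSwitch, Rack.invAct_act_eq]⟩⟩

end

open Quandles in
theorem quandle_V_is_biquandle_switch_general (X : Type*) [Quandle X] (X₁ : Set X)
    (V : (X × X₁) × (X × X₁) → (X × X₁) × (X × X₁))
    (hV : ∀ (a b : X) (x y : X₁),
      V ((a, x), (b, y)) = (((x : X) ◃⁻¹ b, y), ((y : X) ◃ a, x))) :
    NonDeg V ∧ BiqCond V := by
  obtain rfl : V = rackSwitch X₁ := funext fun ⟨⟨a, x⟩, ⟨b, y⟩⟩ => hV a b x y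
  exact ⟨nonDeg_rackSwitch X₁, biqCond_rackSwitch X₁⟩

open Quandles in
/-- The map $V(a,x;b,y) = (b*⁻¹x, y; a*y, x)$ is a biquandle switch on `X × X₁`:
it is non-degenerate and satisfies the biquandle condition. -/
theorem quandle_V_is_biquandle_switch (X : Type*) [Quandle X] (X₁ : Set X)
    (htriv : ∀ x ∈ X₁, ∀ y ∈ X₁, y ◃ x = x)
    (V : (X × X₁) × (X × X₁) → (X × X₁) × (X × X₁))
    (hV : ∀ (a b : X) (x y : X₁),
      V ((a, x), (b, y)) = (((x : X) ◃⁻¹ b, y), ((y : X) ◃ a, x))) :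
    NonDeg V ∧ BiqCond V :=
  quandle_V_is_biquandle_switch_general X X₁ V hV
end Paper
end

section
/- Let S be a biquandle switch on a set X. Then for all a, b ∈ X: S^l(a,b) = a if and only if S^r(a,b) = b. (This is the key algebraic step in the proof that the invariant X_{S,V}(D) is unchanged under the first Reidemeister move: from the crossing relations S^l(a,b) = a and S^r(a,b) = c one deduces c = b.) -/
namespace Paper

section

variable {X : Type*} {S : X × X → X × X}

theorem snd_eq_of_fst_eq {a b d : X} (hinj : Function.Injective fun x => (S (a, x)).1)
    (hd₁ : (S (a, d)).1 = a) (hd₂ : (S (a, d)).2 = d) (h : (S (a, b)).1 = a) :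
    (S (a, b)).2 = b := by
  obtain rfl : b = d := hinj (h.trans hd₁.symm)
  exact hd₂

theorem fst_eq_of_snd_eq {a b u : X} (hinj : Function.Injective fun x => (S (x, b)).2)
    (hu₁ : (S (u, b)).2 = b) (hu₂ : (S (u, b)).1 = u) (h : (S (a, b)).2 = b) :
    (S (a, b)).1 = a := by
  obtain rfl : a = u := hinj (h.trans hu₁.symm)
  exact hu₂

end

theorem biquandle_switch_R1_step_general (X : Type*) (S : X × X → X × X)
    (hnd : NonDeg S) (hbq : BiqCond S) :
    ∀ a b : X, (S (a, b)).1 = a ↔ (S (a, b)).2 = b := by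
  intro a b
  obtain ⟨-, d, hd₁, hd₂⟩ := hbq a
  obtain ⟨⟨u, hu₁, hu₂⟩, -⟩ := hbq b
  exact ⟨snd_eq_of_fst_eq (hnd.1 a).1 hd₁ hd₂, fst_eq_of_snd_eq (hnd.2 b).1 hu₁ hu₂⟩

/-- For a biquandle switch: $Sˡ(a,b) = a$ iff $Sʳ(a,b) = b$ (the key step in
invariance under the first Reidemeister move). -/
theorem biquandle_switch_R1_step (X : Type*) (S : X × X → X × X)
    (hbij : Function.Bijective S) (hYB : YB S)
    (hnd : NonDeg S) (hbq : BiqCond S) :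
    ∀ a b : X, (S (a, b)).1 = a ↔ (S (a, b)).2 = b :=
  biquandle_switch_R1_step_general X S hnd hbq

end Paper
end
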